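/- In the wire-tap II scheme from an almost affine code C: for any t ∈ F^n, X ⊆ {1,...,n}, and m ∈ F^{n−k}, the set Λ_{t,X}(m) = {w ∈ C_m : w|_X = t|_X} is either empty or has cardinality |F|^{k − r(X)}; moreover the number of messages m with Λ_{t,X}(m) ≠ ∅ equals |F|^{n−k−n(X)}, where n(X) = |X| − r(X) is the nullity in M_C. -/
import Mathlib

/-- The projection (puncturing) of a block code `C ⊆ F^n` to the coordinate set `X`. -/
def projC {F : Type*} [DecidableEq F] {n : ℕ} (C : Finset (Fin n → F)) (X : Finset (Fin n)) :
    Finset ({ i // i ∈ X } → F) :=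
  C.image (fun c i => c i.1)

/-- `C ⊆ F^n` is an almost affine code of length `n` and dimension `k`:
`|C| = |F|^k` and every projection has cardinality a power of `|F|`. -/
def IsAlmostAffineCode {F : Type*} [Fintype F] [DecidableEq F] (n k : ℕ)
    (C : Finset (Fin n → F)) : Prop :=
  C.card = Fintype.card F ^ k ∧
    ∀ X : Finset (Fin n), ∃ s : ℕ, (projC C X).card = Fintype.card F ^ s

/-- The `ct`-support of a word `c`. -/
def suppW {F : Type*} [DecidableEq F] {n : ℕ} (c ct : Fin n → F) : Finset (Fin n) :=
  Finset.univ.filter (fun i => c i ≠ ct i)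

/-- `C(X, ct)`: the codewords of `C` agreeing with `ct` on `X`. -/
def agreeOn {F : Type*} [DecidableEq F] {n : ℕ} (C : Finset (Fin n → F))
    (X : Finset (Fin n)) (ct : Fin n → F) : Finset (Fin n → F) :=
  C.filter (fun w => ∀ i ∈ X, w i = ct i)

/-- The `ct`-support of a code `D`. -/
def suppCode {F : Type*} [DecidableEq F] {n : ℕ} (D : Finset (Fin n → F)) (ct : Fin n → F) :
    Finset (Fin n) :=
  D.biUnion (fun w => suppW w ct)

/-- The extension `φ̃ : F^n × F^{n-k} → F^n` (with `n = k + m`) of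
`φ : F^{n-k} × F^{n-k} → F^{n-k}`: it keeps the first `k` coordinates and applies `φ`
to the last `m` ones. -/
def phiTilde {F : Type*} {k m : ℕ} (φ : (Fin m → F) → (Fin m → F) → (Fin m → F))
    (f : Fin (k + m) → F) (g : Fin m → F) : Fin (k + m) → F :=
  fun j =>
    if h : (j : ℕ) < k then f j
    else φ (fun l : Fin m => f ⟨k + l.1, by have := l.isLt; omega⟩) g
      ⟨(j : ℕ) - k, by have := j.isLt; omega⟩

/-- The coset `C_m = φ̃(C, m)` of the wire-tap II scheme. -/
def wiretapCoset {F : Type*} [DecidableEq F] {k m : ℕ}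
    (C : Finset (Fin (k + m) → F)) (φ : (Fin m → F) → (Fin m → F) → (Fin m → F))
    (mm : Fin m → F) : Finset (Fin (k + m) → F) :=
  C.image (fun w => phiTilde φ w mm)



open Finset


lemma fiber_mul {F : Type*} [Fintype F] [DecidableEq F] (hF : 1 < Fintype.card F)
    {n : ℕ} (C : Finset (Fin n → F))
    (hpow : ∀ X : Finset (Fin n), ∃ s, (projC C X).card = Fintype.card F ^ s) :
    ∀ X : Finset (Fin n), ∀ c ∈ C,
      (C.filter (fun w => ∀ i ∈ X, w i = c i)).card * (projC C X).card = C.card := by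
  set q := Fintype.card F with hq
  suffices H : ∀ d : ℕ, ∀ X : Finset (Fin n), n ≤ X.card + d → ∀ c ∈ C,
      (C.filter (fun w => ∀ i ∈ X, w i = c i)).card * (projC C X).card = C.card by
    intro X c hc
    exact H n X (by omega) c hc
  intro d
  induction d with
  | zero =>
    intro X hX c hc
    have hXu : X = univ := by
      apply Finset.eq_univ_of_card
      have := Finset.card_le_univ X
      simp only [Finset.card_univ, Fintype.card_fin] at *
      omega
    subst hXu
    have h1 : C.filter (fun w => ∀ i ∈ (univ : Finset (Fin n)), w i = c i) = {c} := by
      ext w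
      simp only [mem_filter, mem_singleton, mem_univ, forall_true_left]
      constructor
      · rintro ⟨_, h⟩; exact funext h
      · rintro rfl; exact ⟨hc, fun i => rfl⟩
    rw [h1, Finset.card_singleton, one_mul]
    apply Finset.card_image_of_injOn
    intro a _ b _ hab
    exact funext fun i => congrFun hab ⟨i, mem_univ i⟩
  | succ d ih =>
    intro X hX c hc
    rcases le_or_gt n (X.card + d) with h | h
    · exact ih X h c hc
    -- X.card + d + 1 = n
    have hXcard : X.card + d + 1 = n := by omega
    have hCne : C.Nonempty := ⟨c, hc⟩
    -- find i ∉ X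
    have hXne : ∃ i, i ∉ X := by
      by_contra hcon
      push_neg at hcon
      have : X = univ := Finset.eq_univ_iff_forall.2 hcon
      rw [this] at hXcard
      simp [Finset.card_univ] at hXcard
      omega
    obtain ⟨i, hiX⟩ := hXne
    set X' := insert i X with hX'
    have hX'card : X'.card = X.card + 1 := Finset.card_insert_of_notMem hiX
    have IH : ∀ c ∈ C,
        (C.filter (fun w => ∀ j ∈ X', w j = c j)).card * (projC C X').card = C.card :=
      fun c hc => ih X' (by omega) c hc
    set a := (projC C X).card with ha
    set b := (projC C X').card with hb
    set N := C.card with hN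
    -- restriction map
    have hsub : X ⊆ X' := Finset.subset_insert i X
    set ρ : ({ j // j ∈ X' } → F) → ({ j // j ∈ X } → F) :=
      fun f j => f ⟨j.1, hsub j.2⟩ with hρ
    have hres : projC C X = (projC C X').image ρ := by
      unfold projC
      rw [Finset.image_image]
      rfl
    have hmapsto : ∀ f ∈ projC C X', ρ f ∈ projC C X := by
      intro f hf
      rw [hres]
      exact Finset.mem_image_of_mem ρ hf
    -- key claim (∗): fibX c.card * b = Nc c * N
    have star : ∀ c ∈ C,
        (C.filter (fun w => ∀ j ∈ X, w j = c j)).card * b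
          = ((C.filter (fun w => ∀ j ∈ X, w j = c j)).image (fun w => w i)).card * N := by
      intro c hc
      set fib := C.filter (fun w => ∀ j ∈ X, w j = c j) with hfib
      set img := fib.image (fun w => w i) with himg
      have hpart : fib.card = ∑ α ∈ img, (fib.filter (fun w => w i = α)).card :=
        Finset.card_eq_sum_card_fiberwise (fun w hw => Finset.mem_image_of_mem _ hw)
      have hpiece : ∀ α ∈ img, (fib.filter (fun w => w i = α)).card * b = N := by
        intro α hα
        obtain ⟨wα, hwα, hwαi⟩ := Finset.mem_image.1 hα
        have hwαC : wα ∈ C := (Finset.mem_filter.1 hwα).1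
        have hwαX : ∀ j ∈ X, wα j = c j := (Finset.mem_filter.1 hwα).2
        have : fib.filter (fun w => w i = α) = C.filter (fun w => ∀ j ∈ X', w j = wα j) := by
          ext w
          constructor
          · intro hw
            rw [Finset.mem_filter] at hw
            obtain ⟨hw1, hwi⟩ := hw
            rw [hfib, Finset.mem_filter] at hw1
            obtain ⟨hwC, hwX⟩ := hw1
            rw [Finset.mem_filter]
            refine ⟨hwC, fun j hj => ?_⟩
            rcases Finset.mem_insert.1 hj with rfl | hj
            · rw [hwi, hwαi]
            · rw [hwX j hj, hwαX j hj]
          · intro hw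
            rw [Finset.mem_filter] at hw
            obtain ⟨hwC, hw⟩ := hw
            rw [Finset.mem_filter, hfib, Finset.mem_filter]
            refine ⟨⟨hwC, fun j hj => ?_⟩, ?_⟩
            · rw [hw j (Finset.mem_insert_of_mem hj), hwαX j hj]
            · rw [hw i (Finset.mem_insert_self i X), hwαi]
        rw [this]
        exact IH wα hwαC
      rw [hpart, Finset.sum_mul]
      rw [Finset.sum_congr rfl hpiece, Finset.sum_const, smul_eq_mul, mul_comm]
    -- now show Nc c * a = b for all c ∈ C
    set pm : (Fin n → F) → ({ j // j ∈ X } → F) := fun c j => c j.1 with hpm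
    set pm' : (Fin n → F) → ({ j // j ∈ X' } → F) := fun c j => c j.1 with hpm'
    have hbsum : b = ∑ cb ∈ projC C X, ((projC C X').filter (fun f => ρ f = cb)).card :=
      Finset.card_eq_sum_card_fiberwise hmapsto
    have hMN : ∀ c ∈ C, ((projC C X').filter (fun f => ρ f = pm c)).card
        = ((C.filter (fun w => ∀ j ∈ X, w j = c j)).image (fun w => w i)).card := by
      intro c hc
      apply Finset.card_bij (fun f _ => f ⟨i, Finset.mem_insert_self i X⟩)
      · intro f hf
        rw [Finset.mem_filter] at hf
        obtain ⟨hfB, hfρ⟩ := hf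
        obtain ⟨w, hwC, rfl⟩ := Finset.mem_image.1 hfB
        apply Finset.mem_image_of_mem
        rw [Finset.mem_filter]
        exact ⟨hwC, fun j hj => congrFun hfρ ⟨j, hj⟩⟩
      · intro f₁ hf₁ f₂ hf₂ heq
        rw [Finset.mem_filter] at hf₁ hf₂
        funext j
        rcases Finset.mem_insert.1 j.2 with hji | hjX
        · have : j = ⟨i, Finset.mem_insert_self i X⟩ := Subtype.ext hji
          rw [this]; exact heq
        · have h1 := congrFun (hf₁.2.trans hf₂.2.symm) ⟨j.1, hjX⟩
          exact h1
      · intro α hα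
        obtain ⟨w, hw, rfl⟩ := Finset.mem_image.1 hα
        rw [Finset.mem_filter] at hw
        refine ⟨pm' w, ?_, rfl⟩
        rw [Finset.mem_filter]
        refine ⟨Finset.mem_image_of_mem _ hw.1, ?_⟩
        funext j
        exact hw.2 j.1 j.2
    have hAform : ∀ cb ∈ projC C X, ∃ c, c ∈ C ∧ pm c = cb := by
      intro cb hcb
      obtain ⟨c, hc, rfl⟩ := Finset.mem_image.1 hcb
      exact ⟨c, hc, rfl⟩
    have hM1 : ∀ cb ∈ projC C X, 1 ≤ ((projC C X').filter (fun f => ρ f = cb)).card := by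
      intro cb hcb
      obtain ⟨c, hc, rfl⟩ := hAform cb hcb
      rw [Nat.one_le_iff_ne_zero, ← Nat.pos_iff_ne_zero, Finset.card_pos]
      refine ⟨pm' c, ?_⟩
      rw [Finset.mem_filter]
      exact ⟨Finset.mem_image_of_mem _ hc, rfl⟩
    have hMq : ∀ cb ∈ projC C X, ((projC C X').filter (fun f => ρ f = cb)).card ≤ q := by
      intro cb hcb
      obtain ⟨c, hc, rfl⟩ := hAform cb hcb
      rw [hMN c hc]
      exact Finset.card_le_univ _
    have hab : a ≤ b := by
      rw [hbsum]
      calc a = ∑ _cb ∈ projC C X, 1 := by rw [Finset.sum_const, smul_eq_mul, mul_one]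
      _ ≤ _ := Finset.sum_le_sum hM1
    have hba : b ≤ a * q := by
      rw [hbsum]
      calc ∑ cb ∈ projC C X, ((projC C X').filter (fun f => ρ f = cb)).card
          ≤ ∑ _cb ∈ projC C X, q := Finset.sum_le_sum hMq
      _ = a * q := by rw [Finset.sum_const, smul_eq_mul]
    obtain ⟨s, hs⟩ := hpow X
    obtain ⟨s', hs'⟩ := hpow X'
    rw [← ha] at hs
    rw [← hb] at hs'
    have hss' : s ≤ s' := (Nat.pow_le_pow_iff_right hF).1 (by rw [← hs, ← hs']; exact hab)
    have hs's : s' ≤ s + 1 := by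
      apply (Nat.pow_le_pow_iff_right hF).1
      rw [← hs', pow_succ, ← hs]
      exact hba
    have hMconst : ∀ cb ∈ projC C X, ((projC C X').filter (fun f => ρ f = cb)).card * a = b := by
      rcases (by omega : s' = s ∨ s' = s + 1) with hcase | hcase
      · have hbe : b = a := by rw [hs, hs', hcase]
        have : ∀ cb ∈ projC C X, (1 : ℕ) = ((projC C X').filter (fun f => ρ f = cb)).card := by
          rw [← Finset.sum_eq_sum_iff_of_le hM1]
          rw [← hbsum, hbe, Finset.sum_const, smul_eq_mul, mul_one]
        intro cb hcb
        rw [← this cb hcb, one_mul, hbe]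
      · have hbe : b = a * q := by rw [hs, hs', hcase, pow_succ]
        have : ∀ cb ∈ projC C X, ((projC C X').filter (fun f => ρ f = cb)).card = q := by
          rw [← Finset.sum_eq_sum_iff_of_le hMq]
          rw [← hbsum, hbe, Finset.sum_const, smul_eq_mul]
        intro cb hcb
        rw [this cb hcb, hbe, mul_comm]
    -- conclude
    have hcA : pm c ∈ projC C X := Finset.mem_image_of_mem _ hc
    have hNa : ((C.filter (fun w => ∀ j ∈ X, w j = c j)).image (fun w => w i)).card * a = b := by
      rw [← hMN c hc]
      exact hMconst (pm c) hcA
    have hNpos : 0 < ((C.filter (fun w => ∀ j ∈ X, w j = c j)).image (fun w => w i)).card := by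
      have := hM1 (pm c) hcA
      rw [hMN c hc] at this
      exact this
    set Nc := ((C.filter (fun w => ∀ j ∈ X, w j = c j)).image (fun w => w i)).card with hNc
    have hstar := star c hc
    rw [← hNa] at hstar
    -- fib * (Nc * a) = Nc * N
    have : Nc * ((C.filter (fun w => ∀ j ∈ X, w j = c j)).card * a) = Nc * N := by
      rw [← hstar]; ring
    exact Nat.eq_of_mul_eq_mul_left hNpos this

lemma phiTilde_lt {F : Type*} {k m : ℕ} (φ : (Fin m → F) → (Fin m → F) → (Fin m → F))
    (f : Fin (k + m) → F) (g : Fin m → F) (j : Fin (k + m)) (h : (j : ℕ) < k) :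
    phiTilde φ f g j = f j := dif_pos h

lemma phiTilde_ge {F : Type*} {k m : ℕ} (φ : (Fin m → F) → (Fin m → F) → (Fin m → F))
    (f : Fin (k + m) → F) (g : Fin m → F) (j : Fin (k + m)) (h : ¬ (j : ℕ) < k) :
    phiTilde φ f g j = φ (fun l : Fin m => f ⟨k + l.1, by have := l.isLt; omega⟩) g
      ⟨(j : ℕ) - k, by have := j.isLt; omega⟩ := dif_neg h

lemma phiTilde_agree {F : Type*} {k m : ℕ} (φ : (Fin m → F) → (Fin m → F) → (Fin m → F))
    (hφagree : ∀ (X : Finset (Fin m)) (g h mm : Fin m → F),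
      (∀ x ∈ X, g x = h x) ↔ (∀ x ∈ X, φ g mm x = φ h mm x))
    (w w' : Fin (k + m) → F) (mm : Fin m → F) (X : Finset (Fin (k + m))) :
    (∀ j ∈ X, phiTilde φ w mm j = phiTilde φ w' mm j) ↔ (∀ j ∈ X, w j = w' j) := by
  classical
  set Y : Finset (Fin m) :=
    univ.filter (fun x : Fin m => (⟨k + x.1, by have := x.isLt; omega⟩ : Fin (k + m)) ∈ X)
    with hY
  set hi : (Fin (k + m) → F) → (Fin m → F) :=
    fun f l => f ⟨k + l.1, by have := l.isLt; omega⟩ with hhi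
  have key := hφagree Y (hi w) (hi w') mm
  have hjx : ∀ (j : Fin (k + m)), (hjlt : ¬ (j : ℕ) < k) →
      ((⟨(j : ℕ) - k, by have := j.isLt; omega⟩ : Fin m) ∈ Y ↔ j ∈ X) := by
    intro j hj
    rw [hY, mem_filter]
    have : (⟨k + ((j : ℕ) - k), by have := j.isLt; omega⟩ : Fin (k + m)) = j := by
      apply Fin.ext; simp; omega
    rw [this]
    simp
  constructor
  · intro h j hj
    by_cases hjk : (j : ℕ) < k
    · have := h j hj
      rwa [phiTilde_lt φ w mm j hjk, phiTilde_lt φ w' mm j hjk] at this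
    · have hY2 : ∀ x ∈ Y, φ (hi w) mm x = φ (hi w') mm x := by
        intro x hx
        rw [hY, mem_filter] at hx
        have hh := h _ hx.2
        rw [phiTilde_ge φ w mm _ (by simp), phiTilde_ge φ w' mm _ (by simp)] at hh
        have hxx : (⟨((⟨k + x.1, by have := x.isLt; omega⟩ : Fin (k + m)) : ℕ) - k,
            by simp⟩ : Fin m) = x := by
          apply Fin.ext; simp
        rwa [hxx] at hh
      have this2 := key.2 hY2 ⟨(j : ℕ) - k, by have := j.isLt; omega⟩ ((hjx j hjk).2 hj)
      have hjj : j = (⟨k + ((j : ℕ) - k), by have := j.isLt; omega⟩ : Fin (k + m)) := by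
        apply Fin.ext; simp; omega
      rw [hjj]
      exact this2
  · intro h j hj
    by_cases hjk : (j : ℕ) < k
    · rw [phiTilde_lt φ w mm j hjk, phiTilde_lt φ w' mm j hjk]
      exact h j hj
    · have hY1 : ∀ x ∈ Y, hi w x = hi w' x := by
        intro x hx
        rw [hY, mem_filter] at hx
        exact h _ hx.2
      have this2 := key.1 hY1 ⟨(j : ℕ) - k, by have := j.isLt; omega⟩ ((hjx j hjk).2 hj)
      rw [phiTilde_ge φ w mm j hjk, phiTilde_ge φ w' mm j hjk]
      exact this2

lemma phiTilde_injective {F : Type*} {k m : ℕ} (φ : (Fin m → F) → (Fin m → F) → (Fin m → F))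
    (hφagree : ∀ (X : Finset (Fin m)) (g h mm : Fin m → F),
      (∀ x ∈ X, g x = h x) ↔ (∀ x ∈ X, φ g mm x = φ h mm x))
    (mm : Fin m → F) : Function.Injective (fun w : Fin (k + m) → F => phiTilde φ w mm) := by
  intro w w' h
  funext j
  exact (phiTilde_agree φ hφagree w w' mm univ).1
    (fun j _ => congrFun h j) j (mem_univ j)

-- counting functions agreeing with u on Y
lemma count_agree {F : Type*} [Fintype F] [DecidableEq F] {m : ℕ}
    (Y : Finset (Fin m)) (u : Fin m → F) :
    (univ.filter (fun v : Fin m → F => ∀ x ∈ Y, v x = u x)).card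
      = Fintype.card F ^ (m - Y.card) := by
  classical
  have h1 : univ.filter (fun v : Fin m → F => ∀ x ∈ Y, v x = u x)
      = Fintype.piFinset (fun x => if x ∈ Y then {u x} else univ) := by
    ext v
    simp only [mem_filter, mem_univ, true_and, Fintype.mem_piFinset]
    constructor
    · intro h x
      by_cases hx : x ∈ Y
      · simp [hx, h x hx]
      · simp [hx]
    · intro h x hx
      have := h x
      simpa [hx] using this
  rw [h1, Fintype.card_piFinset]
  have h2 : ∀ x : Fin m, (if x ∈ Y then ({u x} : Finset F) else univ).card
      = if x ∈ Y then 1 else Fintype.card F := by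
    intro x; by_cases hx : x ∈ Y <;> simp [hx]
  rw [Finset.prod_congr rfl (fun x _ => h2 x)]
  rw [← Finset.prod_filter_mul_prod_filter_not univ (· ∈ Y)]
  have h3 : ∀ x ∈ univ.filter (· ∈ Y), (if x ∈ Y then 1 else Fintype.card F) = 1 := by
    intro x hx; simp only [mem_filter] at hx; simp [hx.2]
  have h4 : ∀ x ∈ univ.filter (fun x => ¬ x ∈ Y), (if x ∈ Y then 1 else Fintype.card F)
      = Fintype.card F := by
    intro x hx; simp only [mem_filter] at hx; simp [hx.2]
  rw [Finset.prod_congr rfl h3, Finset.prod_congr rfl h4, Finset.prod_const_one, one_mul,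
    Finset.prod_const]
  congr 1
  have h5 := Finset.card_filter_add_card_filter_not (s := univ) (· ∈ Y)
  have h6 : (univ.filter (· ∈ Y)).card = Y.card := by
    congr 1; ext x; simp
  rw [Finset.card_univ, Fintype.card_fin] at h5
  omega

lemma count_agree_comp {F : Type*} [Fintype F] [DecidableEq F] {m : ℕ}
    (σ : (Fin m → F) → (Fin m → F)) (hσ : Function.Bijective σ)
    (Y : Finset (Fin m)) (u : Fin m → F) :
    (univ.filter (fun mm : Fin m → F => ∀ x ∈ Y, σ mm x = u x)).card
      = Fintype.card F ^ (m - Y.card) := by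
  rw [← count_agree Y u]
  apply Finset.card_bij (fun mm _ => σ mm)
  · intro mm hmm
    rw [mem_filter] at hmm ⊢
    exact ⟨mem_univ _, hmm.2⟩
  · intro a _ b _ h
    exact hσ.1 h
  · intro v hv
    rw [mem_filter] at hv
    obtain ⟨mm, rfl⟩ := hσ.2 v
    exact ⟨mm, mem_filter.2 ⟨mem_univ _, hv.2⟩, rfl⟩


lemma low_surj {F : Type*} [Fintype F] [DecidableEq F] {k m : ℕ}
    (C : Finset (Fin (k + m) → F)) (hcard : C.card = Fintype.card F ^ k)
    (hB : ∀ w ∈ C, ∀ w' ∈ C, (∀ j : Fin (k + m), (j : ℕ) < k → w j = w' j) → w = w') :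
    ∀ f : Fin (k + m) → F, ∃ w ∈ C, ∀ j : Fin (k + m), (j : ℕ) < k → w j = f j := by
  classical
  intro f
  set π : (Fin (k + m) → F) → (Fin k → F) := fun w j => w ⟨j.1, by have := j.isLt; omega⟩
    with hπ
  have hinj : Set.InjOn π C := by
    intro a ha b hb h
    apply hB a ha b hb
    intro j hj
    have := congrFun h ⟨(j : ℕ), hj⟩
    simpa [hπ] using this
  have himg : (C.image π).card = Fintype.card (Fin k → F) := by
    rw [Finset.card_image_of_injOn hinj, hcard, Fintype.card_fun, Fintype.card_fin]
  have huniv : C.image π = univ := Finset.eq_univ_of_card _ himg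
  have hmem : (fun j : Fin k => f ⟨j.1, by have := j.isLt; omega⟩) ∈ C.image π := by
    rw [huniv]; exact mem_univ _
  obtain ⟨w, hwC, hwπ⟩ := Finset.mem_image.1 hmem
  refine ⟨w, hwC, fun j hj => ?_⟩
  have := congrFun hwπ ⟨(j : ℕ), hj⟩
  simpa [hπ] using this

lemma low_proj_full {F : Type*} [Fintype F] [DecidableEq F] (hF : 1 < Fintype.card F)
    {k m : ℕ} (C : Finset (Fin (k + m) → F)) (hcard : C.card = Fintype.card F ^ k)
    (hB : ∀ w ∈ C, ∀ w' ∈ C, (∀ j : Fin (k + m), (j : ℕ) < k → w j = w' j) → w = w')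
    (Xl : Finset (Fin (k + m))) (hXl : ∀ j ∈ Xl, (j : ℕ) < k) :
    (projC C Xl).card = Fintype.card F ^ Xl.card := by
  classical
  have hne : Nonempty F := Fintype.card_pos_iff.1 (by omega)
  have huniv : projC C Xl = univ := by
    apply Finset.eq_univ_of_forall
    intro g
    set f : Fin (k + m) → F := fun j => if h : j ∈ Xl then g ⟨j, h⟩ else Classical.choice hne
      with hf
    obtain ⟨w, hwC, hw⟩ := low_surj C hcard hB f
    rw [projC, Finset.mem_image]
    refine ⟨w, hwC, ?_⟩
    funext i
    have hi : w i.1 = f i.1 := hw i.1 (hXl i.1 i.2)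
    rw [hi, hf]
    simp [i.2]
  rw [huniv, Finset.card_univ, Fintype.card_fun, Fintype.card_coe]

lemma auxAdd {k m : ℕ} (x : Fin m) : k + (x : ℕ) < k + m := Nat.add_lt_add_left x.isLt k

lemma auxSub {k m : ℕ} (j : Fin (k + m)) (_h : ¬ (j : ℕ) < k) : (j : ℕ) - k < m := by
  have := j.isLt; omega

lemma auxSub' {k m : ℕ} (x : Fin m) : k + (x : ℕ) - k < m := by have := x.isLt; omega

lemma auxEq {k m : ℕ} (j : Fin (k + m)) (h : ¬ (j : ℕ) < k) :
    k + ((⟨(j : ℕ) - k, auxSub j h⟩ : Fin m) : ℕ) = (j : ℕ) := by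
  simp; omega

lemma auxKey (K M RX XC XL YC : ℕ) (h1 : XL ≤ RX) (h2 : RX ≤ K) (h3 : RX ≤ XC)
    (h4 : XL + YC = XC) (h5 : YC ≤ M) :
    (K - XL) + (M - YC) = (M - (XC - RX)) + (K - RX) := by omega

/-- in the wire-tap II scheme from an almost affine code `C` of dimension
`k` and length `n = k + m`: for any `t ∈ F^n`, `X ⊆ {1,…,n}` and message `mm`, the set
`Λ_{t,X}(mm) = {w ∈ C_mm : w|_X = t|_X}` is empty or of cardinality `|F|^{k - r(X)}`,
and the number of messages `mm` with `Λ_{t,X}(mm) ≠ ∅` is `|F|^{n-k-n(X)}` where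
`n(X) = |X| - r(X)` is the nullity in `M_C`. -/
theorem wiretap_lambda_card
    {F : Type*} [Fintype F] [DecidableEq F] (hF : 1 < Fintype.card F)
    {k m : ℕ} (C : Finset (Fin (k + m) → F)) (hC : IsAlmostAffineCode (k + m) k C)
    (r : Finset (Fin (k + m)) → ℕ)
    (hr : ∀ X : Finset (Fin (k + m)), (projC C X).card = Fintype.card F ^ r X)
    (hB : ∀ w ∈ C, ∀ w' ∈ C, (∀ j : Fin (k + m), (j : ℕ) < k → w j = w' j) → w = w')
    (φ : (Fin m → F) → (Fin m → F) → (Fin m → F))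
    (hφbij : ∀ f, Function.Bijective (φ f))
    (hφagree : ∀ (X : Finset (Fin m)) (g h mm : Fin m → F),
      (∀ x ∈ X, g x = h x) ↔ (∀ x ∈ X, φ g mm x = φ h mm x))
    (t : Fin (k + m) → F) (X : Finset (Fin (k + m))) :
    (∀ mm : Fin m → F,
      ((wiretapCoset C φ mm).filter (fun w => ∀ j ∈ X, w j = t j)) = ∅ ∨
      ((wiretapCoset C φ mm).filter (fun w => ∀ j ∈ X, w j = t j)).card
        = Fintype.card F ^ (k - r X)) ∧
    (Finset.univ.filter (fun mm : Fin m → F =>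
        ((wiretapCoset C φ mm).filter (fun w => ∀ j ∈ X, w j = t j)).Nonempty)).card
      = Fintype.card F ^ (m - (X.card - r X)) := by
  classical
  obtain ⟨hcard, hpow⟩ := hC
  set q := Fintype.card F with hq
  have hq0 : 0 < q := by omega
  have hfib := fiber_mul hF C hpow
  have hrk : r X ≤ k := by
    have h1 : (projC C X).card ≤ C.card := Finset.card_image_le
    rw [hr, hcard] at h1
    exact (Nat.pow_le_pow_iff_right hF).1 h1
  have part1 : ∀ mm : Fin m → F,
      ((wiretapCoset C φ mm).filter (fun w => ∀ j ∈ X, w j = t j)) = ∅ ∨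
      ((wiretapCoset C φ mm).filter (fun w => ∀ j ∈ X, w j = t j)).card = q ^ (k - r X) := by
    intro mm
    by_cases hΛ : ((wiretapCoset C φ mm).filter (fun w => ∀ j ∈ X, w j = t j)) = ∅
    · left; exact hΛ
    right
    obtain ⟨s0, hs0⟩ := Finset.nonempty_iff_ne_empty.2 hΛ
    rw [Finset.mem_filter] at hs0
    obtain ⟨hs0m, hs0t⟩ := hs0
    obtain ⟨w0, hw0C, hw0e⟩ := Finset.mem_image.1 hs0m
    have hw0t : ∀ j ∈ X, phiTilde φ w0 mm j = t j := by
      intro j hj; rw [hw0e]; exact hs0t j hj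
    have hset : (wiretapCoset C φ mm).filter (fun w => ∀ j ∈ X, w j = t j)
        = (C.filter (fun w => ∀ j ∈ X, w j = w0 j)).image (fun w => phiTilde φ w mm) := by
      unfold wiretapCoset
      rw [Finset.filter_image]
      congr 1
      apply Finset.filter_congr
      intro w _
      constructor
      · intro h
        apply (phiTilde_agree φ hφagree w w0 mm X).1
        intro j hj
        rw [h j hj, hw0t j hj]
      · intro h j hj
        rw [← hw0t j hj]
        exact (phiTilde_agree φ hφagree w w0 mm X).2 h j hj
    rw [hset, Finset.card_image_of_injOn ((phiTilde_injective φ hφagree mm).injOn)]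
    have hfx := hfib X w0 hw0C
    rw [hr, hcard] at hfx
    apply Nat.eq_of_mul_eq_mul_right (pow_pos hq0 (r X))
    rw [hfx, ← pow_add]
    congr 1
    exact (Nat.sub_add_cancel hrk).symm
  refine ⟨part1, ?_⟩
  set Λ : (Fin m → F) → Finset (Fin (k + m) → F) :=
    fun mm => (wiretapCoset C φ mm).filter (fun w => ∀ j ∈ X, w j = t j) with hΛdef
  set Xl : Finset (Fin (k + m)) := X.filter (fun j => (j : ℕ) < k) with hXldef
  set Y : Finset (Fin m) :=
    univ.filter (fun x : Fin m =>
      (⟨k + x.1, auxAdd x⟩ : Fin (k + m)) ∈ X) with hYdef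
  set G := univ.filter (fun mm : Fin m → F => (Λ mm).Nonempty) with hGdef
  -- first evaluation of the sum
  have hsum1 : ∑ mm : Fin m → F, (Λ mm).card = G.card * q ^ (k - r X) := by
    rw [← Finset.sum_filter_add_sum_filter_not univ (fun mm => (Λ mm).Nonempty)
      (fun mm => (Λ mm).card)]
    have h2 : ∑ mm ∈ univ.filter (fun mm => ¬ (Λ mm).Nonempty), (Λ mm).card = 0 := by
      apply Finset.sum_eq_zero
      intro mm hmm
      rw [mem_filter] at hmm
      rw [Finset.card_eq_zero, ← Finset.not_nonempty_iff_eq_empty]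
      exact hmm.2
    have h1 : ∑ mm ∈ univ.filter (fun mm => (Λ mm).Nonempty), (Λ mm).card
        = G.card * q ^ (k - r X) := by
      rw [Finset.sum_congr rfl (fun mm hmm => ?_), Finset.sum_const, smul_eq_mul]
      rw [mem_filter] at hmm
      rcases part1 mm with he | hc
      · exact absurd he (Finset.nonempty_iff_ne_empty.1 hmm.2)
      · exact hc
    rw [h1, h2, add_zero]
  have hXlk : ∀ j ∈ Xl, (j : ℕ) < k := fun j hj => (Finset.mem_filter.1 hj).2
  have hprojXl : (projC C Xl).card = q ^ Xl.card := low_proj_full hF C hcard hB Xl hXlk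
  have hXlck : Xl.card ≤ k := by
    have h1 : (projC C Xl).card ≤ C.card := Finset.card_image_le
    rw [hprojXl, hcard] at h1
    exact (Nat.pow_le_pow_iff_right hF).1 h1
  have hlowcard : (C.filter (fun w => ∀ j ∈ Xl, w j = t j)).card = q ^ (k - Xl.card) := by
    obtain ⟨ws, hwsC, hws⟩ := low_surj C hcard hB t
    have heq : C.filter (fun w => ∀ j ∈ Xl, w j = t j)
        = C.filter (fun w => ∀ j ∈ Xl, w j = ws j) := by
      apply Finset.filter_congr
      intro w _
      constructor
      · intro h j hj
        rw [h j hj, hws j (hXlk j hj)]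
      · intro h j hj
        rw [h j hj, hws j (hXlk j hj)]
    rw [heq]
    have hfx := hfib Xl ws hwsC
    rw [hprojXl, hcard] at hfx
    apply Nat.eq_of_mul_eq_mul_right (pow_pos hq0 Xl.card)
    rw [hfx, ← pow_add]
    congr 1
    exact (Nat.sub_add_cancel hXlck).symm
  -- second evaluation of the sum
  have hsum2 : ∑ mm : Fin m → F, (Λ mm).card
      = q ^ (k - Xl.card) * q ^ (m - Y.card) := by
    have hstep1 : ∀ mm : Fin m → F, (Λ mm).card
        = (C.filter (fun w => ∀ j ∈ X, phiTilde φ w mm j = t j)).card := by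
      intro mm
      show ((wiretapCoset C φ mm).filter (fun w => ∀ j ∈ X, w j = t j)).card = _
      unfold wiretapCoset
      rw [Finset.filter_image,
        Finset.card_image_of_injOn ((phiTilde_injective φ hφagree mm).injOn)]
    calc ∑ mm : Fin m → F, (Λ mm).card
        = ∑ mm : Fin m → F, ∑ w ∈ C,
            if (∀ j ∈ X, phiTilde φ w mm j = t j) then 1 else 0 := by
          refine Finset.sum_congr rfl fun mm _ => ?_
          rw [hstep1 mm, Finset.card_filter]
      _ = ∑ w ∈ C, ∑ mm : Fin m → F,
            if (∀ j ∈ X, phiTilde φ w mm j = t j) then 1 else 0 := Finset.sum_comm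
      _ = ∑ w ∈ C, (univ.filter
            (fun mm : Fin m → F => ∀ j ∈ X, phiTilde φ w mm j = t j)).card := by
          refine Finset.sum_congr rfl fun w _ => ?_
          rw [Finset.card_filter]
      _ = ∑ w ∈ C, (if (∀ j ∈ Xl, w j = t j) then q ^ (m - Y.card) else 0) := by
          refine Finset.sum_congr rfl fun w _ => ?_
          have hiff : ∀ mm : Fin m → F, (∀ j ∈ X, phiTilde φ w mm j = t j) ↔
              ((∀ j ∈ Xl, w j = t j) ∧
                ∀ x ∈ Y, φ (fun l : Fin m => w ⟨k + l.1, auxAdd l⟩) mm x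
                  = t ⟨k + x.1, auxAdd x⟩) := by
            intro mm
            constructor
            · intro h
              constructor
              · intro j hj
                rw [hXldef, mem_filter] at hj
                have h2 := h j hj.1
                rwa [phiTilde_lt φ w mm j hj.2] at h2
              · intro x hx
                rw [hYdef, mem_filter] at hx
                have h2 := h _ hx.2
                rw [phiTilde_ge φ w mm _ (by simp)] at h2
                have hxx : (⟨((⟨k + x.1, auxAdd x⟩ : Fin (k + m)) : ℕ) - k,
                    auxSub' x⟩ : Fin m) = x := by apply Fin.ext; simp
                rwa [hxx] at h2
            · rintro ⟨hl, hh⟩ j hj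
              by_cases hjk : (j : ℕ) < k
              · rw [phiTilde_lt φ w mm j hjk]
                exact hl j (by rw [hXldef, mem_filter]; exact ⟨hj, hjk⟩)
              · rw [phiTilde_ge φ w mm j hjk]
                have hx : (⟨(j : ℕ) - k, auxSub j hjk⟩ : Fin m) ∈ Y := by
                  rw [hYdef, mem_filter]
                  refine ⟨mem_univ _, ?_⟩
                  convert hj using 2
                  exact auxEq j hjk
                have h2 := hh _ hx
                convert h2 using 2
                exact Fin.ext (auxEq j hjk).symm
          by_cases hlow : (∀ j ∈ Xl, w j = t j)
          · rw [if_pos hlow]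
            have heq2 : univ.filter
                  (fun mm : Fin m → F => ∀ j ∈ X, phiTilde φ w mm j = t j)
                = univ.filter (fun mm : Fin m → F =>
                    ∀ x ∈ Y, φ (fun l : Fin m => w ⟨k + l.1, auxAdd l⟩) mm x
                      = t ⟨k + x.1, auxAdd x⟩) := by
              apply Finset.filter_congr
              intro mm _
              rw [hiff mm]
              exact ⟨fun h => h.2, fun h => ⟨hlow, h⟩⟩
            rw [heq2]
            exact count_agree_comp (φ (fun l : Fin m => w ⟨k + l.1, auxAdd l⟩))
              (hφbij _) Y (fun x : Fin m => t ⟨k + x.1, auxAdd x⟩)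
          · rw [if_neg hlow]
            rw [Finset.card_eq_zero, Finset.filter_eq_empty_iff]
            intro mm _
            exact fun hcon => hlow ((hiff mm).1 hcon).1
      _ = ∑ w ∈ C.filter (fun w => ∀ j ∈ Xl, w j = t j), q ^ (m - Y.card) :=
          (Finset.sum_filter _ _).symm
      _ = (C.filter (fun w => ∀ j ∈ Xl, w j = t j)).card * q ^ (m - Y.card) := by
          rw [Finset.sum_const, smul_eq_mul]
      _ = q ^ (k - Xl.card) * q ^ (m - Y.card) := by rw [hlowcard]
  -- cardinality bookkeeping
  have hYXh : Y.card = (X.filter (fun j : Fin (k + m) => ¬ (j : ℕ) < k)).card := by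
    apply Finset.card_bij (fun (x : Fin m) (_ : x ∈ Y) =>
      (⟨k + x.1, auxAdd x⟩ : Fin (k + m)))
    · intro x hx
      rw [hYdef, mem_filter] at hx
      rw [mem_filter]
      exact ⟨hx.2, by simp⟩
    · intro a _ b _ h
      have h2 : k + (a : ℕ) = k + (b : ℕ) := by
        simpa using congrArg Fin.val h
      exact Fin.ext (Nat.add_left_cancel h2)
    · intro j hj
      rw [mem_filter] at hj
      refine ⟨⟨(j : ℕ) - k, auxSub j hj.2⟩, ?_, ?_⟩
      · rw [hYdef, mem_filter]
        refine ⟨mem_univ _, ?_⟩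
        convert hj.1 using 2
        exact auxEq j hj.2
      · exact Fin.ext (auxEq j hj.2)
  have hsplit : Xl.card + Y.card = X.card := by
    have h1 := Finset.card_filter_add_card_filter_not
      (s := X) (fun j : Fin (k + m) => (j : ℕ) < k)
    rw [hYXh]
    exact h1
  have hXlr : Xl.card ≤ r X := by
    have hres : projC C Xl = (projC C X).image (fun f (i : {i // i ∈ Xl}) =>
        f ⟨i.1, Finset.mem_of_mem_filter i.1 i.2⟩) := by
      unfold projC
      rw [Finset.image_image]
      rfl
    have h1 : (projC C Xl).card ≤ (projC C X).card := by
      rw [hres]; exact Finset.card_image_le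
    rw [hprojXl, hr] at h1
    exact (Nat.pow_le_pow_iff_right hF).1 h1
  have hrXc : r X ≤ X.card := by
    have h1 : (projC C X).card ≤ Fintype.card ({i // i ∈ X} → F) := Finset.card_le_univ _
    rw [hr, Fintype.card_fun, Fintype.card_coe] at h1
    exact (Nat.pow_le_pow_iff_right hF).1 h1
  have hYm : Y.card ≤ m := by
    have h1 := Finset.card_le_univ Y
    rwa [Fintype.card_fin] at h1
  apply Nat.eq_of_mul_eq_mul_right (pow_pos hq0 (k - r X))
  rw [← hsum1, hsum2, ← pow_add, ← pow_add]
  congr 1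
  exact auxKey k m (r X) X.card Xl.card Y.card hXlr hrk hrXc hsplit hYm
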